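/- arXiv:1311.2294 — 3 statements merged into one kernel-verified Lean document; each statement's English description precedes it below -/
import Mathlib

section
/- For all vertices A, B of L_{k,n} (with k < n - k), the graph distance satisfies: ‖AB‖ = 2⌈(k - |A∩B|)/(n-2k)⌉ + 1 if |A| ≠ |B|, and ‖AB‖ = 2⌈(|A| - |A∩B|)/(n-2k)⌉ if |A| = |B|. -/
/-- Vertices of the level graph: k-element and (n-k)-element subsets of {1,…,n}. -/
def LevelVert (n k : ℕ) := {A : Finset (Fin n) // A.card = k ∨ A.card = n - k}

/-- The (k,n)-level graph L_{k,n}. -/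
def levelGraph (n k : ℕ) : SimpleGraph (LevelVert n k) where
  Adj A B := A ≠ B ∧
    ((A.1.card = k ∧ B.1.card = n - k ∧ A.1 ⊆ B.1) ∨
     (B.1.card = k ∧ A.1.card = n - k ∧ B.1 ⊆ A.1))
  symm := by constructor; intro A B h; exact ⟨Ne.symm h.1, h.2.elim Or.inr Or.inl⟩
  loopless := by constructor; intro A h; exact h.1 rfl

/-- The initial vertex P = {1,…,k} (as a subset of Fin n). -/
def Pset (n k : ℕ) : Finset (Fin n) := Finset.univ.filter (fun x => (x : ℕ) < k)

/-- The distance function d on vertices of the level graph. -/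
def dFun (n k : ℕ) (A B : LevelVert n k) : ℕ :=
  if A.1.card = B.1.card then
    2 * ((A.1.card - (A.1 ∩ B.1).card + (n - 2 * k) - 1) / (n - 2 * k))
  else
    2 * ((k - (A.1 ∩ B.1).card + (n - 2 * k) - 1) / (n - 2 * k)) + 1

/-!
With `m = n - 2k`, `dFun · B` is a potential for the distance to `B`: it vanishes at `B`,
changes by at most one along an edge, and every vertex other than `B` has a neighbour where it
drops. The bounds along an edge `A ⊆ C` come from `#(A ∩ B) ≤ #(C ∩ B) ≤ #(A ∩ B) + m`. For a
descending neighbour, a `k`-set `A` moves up to `A ∪ S` (padded to size `n - k`) with `S` a set of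
at most `m` points of `B \ A`, and an `(n - k)`-set `A` moves down to a `k`-subset of `A` that keeps
as much of `A ∩ B` as it can.
-/

open Finset

namespace SimpleGraph

variable {V : Type*} {G : SimpleGraph V} {f : V → ℕ}

theorem Walk.le_add_length_of_lipschitz (hf : ∀ u v, G.Adj u v → f u ≤ f v + 1) {u v : V}
    (p : G.Walk u v) : f u ≤ f v + p.length := by
  induction p with
  | nil => simp
  | cons h _ ih =>
    have := hf _ _ h
    rw [length_cons]
    omega

theorem exists_walk_length_le_of_descent {b : V} (hf : ∀ u, u ≠ b → ∃ v, G.Adj u v ∧ f v < f u)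
    (u : V) : ∃ p : G.Walk u b, p.length ≤ f u := by
  induction hu : f u using Nat.strong_induction_on generalizing u with
  | _ N ih =>
    by_cases hub : u = b
    · subst hub
      exact ⟨.nil, by simp⟩
    obtain ⟨v, huv, hv⟩ := hf u hub
    obtain ⟨p, hp⟩ := ih (f v) (hu ▸ hv) v rfl
    exact ⟨.cons huv p, by rw [Walk.length_cons]; omega⟩

theorem dist_eq_of_lipschitz_of_descent {b : V} (hb : f b = 0)
    (hlip : ∀ u v, G.Adj u v → f u ≤ f v + 1) (hdesc : ∀ u, u ≠ b → ∃ v, G.Adj u v ∧ f v < f u)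
    (u : V) : G.dist u b = f u := by
  obtain ⟨p, hp⟩ := exists_walk_length_le_of_descent hdesc u
  obtain ⟨q, hq⟩ := Reachable.exists_walk_length_eq_dist ⟨p⟩
  have := q.le_add_length_of_lipschitz hlip
  have := dist_le p
  omega

end SimpleGraph

namespace Nat

variable {m x y : ℕ}

theorem ceilDiv_le_ceilDiv (hm : 0 < m) (h : x ≤ y) : x ⌈/⌉ m ≤ y ⌈/⌉ m :=
  (gc_mul_ceilDiv hm).monotone_l h

theorem ceilDiv_le_ceilDiv_add_one (hm : 0 < m) (h : x ≤ y + m) : x ⌈/⌉ m ≤ y ⌈/⌉ m + 1 := by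
  have : y ≤ m * (y ⌈/⌉ m) := (ceilDiv_le_iff_le_mul hm).1 le_rfl
  rw [ceilDiv_le_iff_le_mul hm, Nat.mul_add_one]
  omega

theorem ceilDiv_lt_ceilDiv (hm : 0 < m) (hx : 0 < x) (h : y ≤ x - m) : y ⌈/⌉ m < x ⌈/⌉ m := by
  have hxc : x ≤ m * (x ⌈/⌉ m) := (ceilDiv_le_iff_le_mul hm).1 le_rfl
  have hc : 0 < x ⌈/⌉ m := Nat.pos_of_ne_zero fun h0 => by rw [h0] at hxc; omega
  have : y ⌈/⌉ m ≤ x ⌈/⌉ m - 1 :=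
    (ceilDiv_le_iff_le_mul hm).2 (by rw [Nat.mul_sub_one]; omega)
  omega

end Nat

namespace Finset

variable {α : Type*} [DecidableEq α]

theorem card_inter_le_card_inter_add_card_sdiff (A B C : Finset α) :
    #(C ∩ B) ≤ #(A ∩ B) + #(C \ A) :=
  calc #(C ∩ B) ≤ #((A ∩ B) ∪ (C \ A)) := card_le_card fun x => by simp only [mem_inter, mem_union, mem_sdiff]; tauto
    _ ≤ #(A ∩ B) + #(C \ A) := card_union_le _ _

theorem card_inter_lt_of_ne {A B : Finset α} (h : #A = #B) (hne : A ≠ B) : #(A ∩ B) < #A :=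
  lt_of_le_of_ne (card_le_card inter_subset_left) fun he =>
    hne (eq_of_subset_of_card_le (inter_eq_left.1 (eq_of_subset_of_card_le inter_subset_left
      he.ge)) h.ge)

theorem exists_superset_card_eq_add_le_card_inter [Fintype α] {A B : Finset α} {s N : ℕ}
    (hs : s ≤ #(B \ A)) (hN : #A + s ≤ N) (hNα : N ≤ Fintype.card α) :
    ∃ C, A ⊆ C ∧ #C = N ∧ #(A ∩ B) + s ≤ #(C ∩ B) := by
  obtain ⟨S, hSB, rfl⟩ := exists_subset_card_eq hs
  have hAS : Disjoint A S := disjoint_of_subset_right hSB disjoint_sdiff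
  obtain ⟨C, hC, -, rfl⟩ := exists_subsuperset_card_eq (n := N) (subset_univ (A ∪ S))
    (by rwa [card_union_of_disjoint hAS]) (by rwa [card_univ])
  refine ⟨C, subset_union_left.trans hC, rfl, ?_⟩
  calc #(A ∩ B) + #S = #((A ∩ B) ∪ S) :=
        (card_union_of_disjoint (disjoint_of_subset_left inter_subset_left hAS)).symm
    _ ≤ #(C ∩ B) := card_le_card <| union_subset
        (inter_subset_inter (subset_union_left.trans hC) subset_rfl)
        (subset_inter (subset_union_right.trans hC) (hSB.trans sdiff_subset))

theorem exists_subset_card_eq_min_le_card_inter {A : Finset α} (B : Finset α) {N : ℕ}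
    (hN : N ≤ #A) : ∃ C ⊆ A, #C = N ∧ min N #(A ∩ B) ≤ #(C ∩ B) := by
  obtain ⟨D, hD, hDcard⟩ := exists_subset_card_eq (s := A ∩ B) (min_le_right N _)
  obtain ⟨C, hDC, hCA, hC⟩ :=
    exists_subsuperset_card_eq (hD.trans inter_subset_left) (by omega) hN
  exact ⟨C, hCA, hC, hDcard ▸ card_le_card (subset_inter hDC (hD.trans inter_subset_right))⟩

end Finset

variable {n k : ℕ}

theorem levelGraph_adj_of_subset (hk : 0 < n - 2 * k) {A C : LevelVert n k} (hA : #A.1 = k)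
    (hC : #C.1 = n - k) (h : A.1 ⊆ C.1) : (levelGraph n k).Adj A C :=
  ⟨fun e => by rw [e] at hA; omega, Or.inl ⟨hA, hC, h⟩⟩

theorem dFun_of_card_eq {A B : LevelVert n k} (h : #A.1 = #B.1) :
    dFun n k A B = 2 * ((#A.1 - #(A.1 ∩ B.1)) ⌈/⌉ (n - 2 * k)) :=
  if_pos h

theorem dFun_of_card_ne {A B : LevelVert n k} (h : #A.1 ≠ #B.1) :
    dFun n k A B = 2 * ((k - #(A.1 ∩ B.1)) ⌈/⌉ (n - 2 * k)) + 1 :=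
  if_neg h

theorem dFun_self (B : LevelVert n k) : dFun n k B B = 0 := by
  rw [dFun_of_card_eq rfl, inter_self, Nat.sub_self, zero_ceilDiv, mul_zero]

theorem dFun_le_dFun_add_one_of_subset (hk : 0 < n - 2 * k) {A C : LevelVert n k}
    (B : LevelVert n k) (hA : #A.1 = k) (hC : #C.1 = n - k) (h : A.1 ⊆ C.1) :
    dFun n k A B ≤ dFun n k C B + 1 ∧ dFun n k C B ≤ dFun n k A B + 1 := by
  have hlo : #(A.1 ∩ B.1) ≤ #(C.1 ∩ B.1) := card_le_card (inter_subset_inter h subset_rfl)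
  have hhi : #(C.1 ∩ B.1) ≤ #(A.1 ∩ B.1) + (n - 2 * k) := by
    have := card_inter_le_card_inter_add_card_sdiff A.1 B.1 C.1
    rw [card_sdiff_of_subset h, hA, hC] at this
    omega
  have htA : #(A.1 ∩ B.1) ≤ k := (card_le_card inter_subset_left).trans hA.le
  rcases B.2 with hB | hB
  · rw [dFun_of_card_eq (hA.trans hB.symm), dFun_of_card_ne (by omega), hA]
    have := Nat.ceilDiv_le_ceilDiv hk (show k - #(C.1 ∩ B.1) ≤ k - #(A.1 ∩ B.1) by omega)
    have := Nat.ceilDiv_le_ceilDiv_add_one hk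
      (show k - #(A.1 ∩ B.1) ≤ k - #(C.1 ∩ B.1) + (n - 2 * k) by omega)
    omega
  · rw [dFun_of_card_ne (by omega), dFun_of_card_eq (hC.trans hB.symm), hC]
    have := Nat.ceilDiv_le_ceilDiv hk (show k - #(A.1 ∩ B.1) ≤ n - k - #(C.1 ∩ B.1) by omega)
    have := Nat.ceilDiv_le_ceilDiv_add_one hk
      (show n - k - #(C.1 ∩ B.1) ≤ k - #(A.1 ∩ B.1) + (n - 2 * k) by omega)
    omega

theorem dFun_le_dFun_add_one_of_adj (hk : 0 < n - 2 * k) {A C : LevelVert n k}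
    (B : LevelVert n k) (h : (levelGraph n k).Adj A C) : dFun n k A B ≤ dFun n k C B + 1 := by
  rcases h.2 with ⟨hA, hC, hAC⟩ | ⟨hC, hA, hCA⟩
  · exact (dFun_le_dFun_add_one_of_subset hk B hA hC hAC).1
  · exact (dFun_le_dFun_add_one_of_subset hk B hC hA hCA).2

theorem exists_adj_add_le_card_inter (hk : 0 < n - 2 * k) {A : LevelVert n k} (hA : #A.1 = k)
    (B : Finset (Fin n)) {s : ℕ} (hs : s ≤ #(B \ A.1)) (hsm : s ≤ n - 2 * k) :
    ∃ C : LevelVert n k, (levelGraph n k).Adj A C ∧ #C.1 = n - k ∧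
      #(A.1 ∩ B) + s ≤ #(C.1 ∩ B) := by
  obtain ⟨C, hAC, hC, hCB⟩ := exists_superset_card_eq_add_le_card_inter (N := n - k) hs
    (by omega) (by simp)
  exact ⟨⟨C, .inr hC⟩, levelGraph_adj_of_subset hk hA hC hAC, hC, hCB⟩

theorem exists_adj_min_le_card_inter (hk : 0 < n - 2 * k) {A : LevelVert n k}
    (hA : #A.1 = n - k) (B : Finset (Fin n)) :
    ∃ C : LevelVert n k, (levelGraph n k).Adj A C ∧ #C.1 = k ∧
      min k #(A.1 ∩ B) ≤ #(C.1 ∩ B) := by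
  obtain ⟨C, hCA, hC, hCB⟩ := exists_subset_card_eq_min_le_card_inter (A := A.1) B (N := k) (by omega)
  exact ⟨⟨C, .inl hC⟩, (levelGraph_adj_of_subset (C := A) hk hC hA hCA).symm, hC, hCB⟩

theorem exists_adj_dFun_lt (hk : 0 < n - 2 * k) {A B : LevelVert n k} (hAB : A ≠ B) :
    ∃ C, (levelGraph n k).Adj A C ∧ dFun n k C B < dFun n k A B := by
  have hne : A.1 ≠ B.1 := fun h => hAB (Subtype.ext h)
  have hsdiff : #(B.1 \ A.1) = #B.1 - #(A.1 ∩ B.1) := card_sdiff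
  have htA := card_le_card (inter_subset_left (s₁ := A.1) (s₂ := B.1))
  have htB := card_le_card (inter_subset_right (s₁ := A.1) (s₂ := B.1))
  rcases A.2, B.2 with ⟨hA | hA, hB | hB⟩
  · have ht := card_inter_lt_of_ne (hA.trans hB.symm) hne
    obtain ⟨C, hAC, hC, hCB⟩ := exists_adj_add_le_card_inter hk hA B.1
      (s := min (k - #(A.1 ∩ B.1)) (n - 2 * k)) (by omega) (min_le_right _ _)
    refine ⟨C, hAC, ?_⟩
    rw [dFun_of_card_ne (by omega), dFun_of_card_eq (hA.trans hB.symm), hA]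
    have := Nat.ceilDiv_lt_ceilDiv hk (show 0 < k - #(A.1 ∩ B.1) by omega)
      (show k - #(C.1 ∩ B.1) ≤ k - #(A.1 ∩ B.1) - (n - 2 * k) by omega)
    omega
  · obtain ⟨C, hAC, hC, hCB⟩ := exists_adj_add_le_card_inter hk hA B.1
      (s := n - 2 * k) (by omega) le_rfl
    refine ⟨C, hAC, ?_⟩
    rw [dFun_of_card_eq (hC.trans hB.symm), dFun_of_card_ne (by omega), hC]
    have := Nat.ceilDiv_le_ceilDiv hk (show n - k - #(C.1 ∩ B.1) ≤ k - #(A.1 ∩ B.1) by omega)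
    omega
  · obtain ⟨C, hAC, hC, hCB⟩ := exists_adj_min_le_card_inter hk hA B.1
    refine ⟨C, hAC, ?_⟩
    rw [dFun_of_card_eq (hC.trans hB.symm), dFun_of_card_ne (by omega), hC]
    have := Nat.ceilDiv_le_ceilDiv hk (show k - #(C.1 ∩ B.1) ≤ k - #(A.1 ∩ B.1) by omega)
    omega
  · have ht := card_inter_lt_of_ne (hA.trans hB.symm) hne
    obtain ⟨C, hAC, hC, hCB⟩ := exists_adj_min_le_card_inter hk hA B.1
    refine ⟨C, hAC, ?_⟩
    rw [dFun_of_card_ne (by omega), dFun_of_card_eq (hA.trans hB.symm), hA]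
    have := Nat.ceilDiv_lt_ceilDiv hk (show 0 < n - k - #(A.1 ∩ B.1) by omega)
      (show k - #(C.1 ∩ B.1) ≤ n - k - #(A.1 ∩ B.1) - (n - 2 * k) by omega)
    omega

theorem levelGraph_dist_eq (n k : ℕ) (hk : 0 < n - 2 * k) :
    ∀ A B : LevelVert n k, (levelGraph n k).dist A B = dFun n k A B := fun A B =>
  SimpleGraph.dist_eq_of_lipschitz_of_descent (f := fun A => dFun n k A B) (dFun_self B)
    (fun _ _ h => dFun_le_dFun_add_one_of_adj hk B h) (fun _ hAB => exists_adj_dFun_lt hk hAB) A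
end

section
/- The diameter of the graph L_{k,n} (with 0 < k < n - k) equals 2⌈k/(n-2k)⌉ + 1. -/
/-!
Write `d = n - 2k` and `t = ⌈k/d⌉`. For a fixed set `T`, the potential
`2|v ∩ T| + d·[v is a k-set]` grows by at most `d` along every edge, since going up from a
`k`-set to an `(n-k)`-set adds only `d` new points. Between a `k`-set `A` and its complement the
potential rises from `d` to `2(n-k)`, so every walk between them has length at least `n/d`, and
being odd (the graph is bipartite) at least `2t + 1`. Conversely, two steps `A ⊆ B ⊇ A'` can
trade up to `d` points of `A` for points of any target, so every `k`-set is within `2t + 1` of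
every vertex; complementation is an automorphism exchanging the two levels.
-/

open Finset SimpleGraph

theorem SimpleGraph.Hom.edist_le {V W : Type*} {G : SimpleGraph V} {H : SimpleGraph W}
    (f : G →g H) (u v : V) : H.edist (f u) (f v) ≤ G.edist u v :=
  le_iInf fun p => (SimpleGraph.edist_le (p.map f)).trans_eq (by rw [Walk.length_map])

theorem SimpleGraph.Walk.le_add_mul_length {V : Type*} {G : SimpleGraph V} {f : V → ℕ} {c : ℕ}
    (hf : ∀ ⦃u v⦄, G.Adj u v → f v ≤ f u + c) {u v : V} (p : G.Walk u v) :
    f v ≤ f u + c * p.length := by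
  induction p with
  | nil => simp
  | cons h q ih =>
    rw [Walk.length_cons, mul_add_one]
    have := hf h
    omega

theorem Finset.exists_trade_via_superset {α : Type*} [Fintype α] [DecidableEq α]
    {A T : Finset α} {k m : ℕ} (hA : #A = k) (hT : k ≤ #T) (hm : k + m ≤ Fintype.card α) :
    ∃ B A', A ⊆ B ∧ A' ⊆ B ∧ #B = k + m ∧ #A' = k ∧
      min k (#(A ∩ T) + m) ≤ #(A' ∩ T) := by
  have hAT : #(A ∩ T) ≤ k := hA ▸ card_le_card (inter_subset_left : A ∩ T ⊆ A)
  obtain ⟨S, hAS, hST, hS⟩ := exists_subsuperset_card_eq (n := min k (#(A ∩ T) + m))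
    (inter_subset_right : A ∩ T ⊆ T) (by omega) (by omega)
  have hAS' : #(A ∩ T) ≤ #(A ∩ S) := card_le_card (subset_inter inter_subset_left hAS)
  have hunion : #(A ∪ S) ≤ k + m := by
    have := card_union_add_card_inter A S
    omega
  obtain ⟨B, hASB, -, hB⟩ :=
    exists_subsuperset_card_eq (n := k + m) (subset_univ (A ∪ S)) hunion (by simpa using hm)
  obtain ⟨A', hSA', hA'B, hA'⟩ := exists_subsuperset_card_eq (n := k)
    (subset_union_right.trans hASB) (by omega) (by omega)
  exact ⟨B, A', subset_union_left.trans hASB, hA'B, hB, hA',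
    hS ▸ card_le_card (subset_inter hSA' hST)⟩

namespace LevelVert

variable {n k : ℕ}

def lower {A : Finset (Fin n)} (hA : #A = k) : LevelVert n k := ⟨A, .inl hA⟩

def upper {B : Finset (Fin n)} (hB : #B = n - k) : LevelVert n k := ⟨B, .inr hB⟩

end LevelVert

open LevelVert

namespace levelGraph

variable {n k : ℕ}

theorem adj_of_subset (hkn : k ≠ n - k) {A B : Finset (Fin n)} (hA : #A = k) (hB : #B = n - k)
    (hAB : A ⊆ B) : (levelGraph n k).Adj (lower hA) (upper hB) := by
  refine ⟨fun h => hkn ?_, .inl ⟨hA, hB, hAB⟩⟩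
  rw [← hB, ← hA]
  exact congrArg (fun v : LevelVert n k => #v.1) h

def compl (hkn : k ≤ n) : levelGraph n k →g levelGraph n k where
  toFun v := ⟨v.1ᶜ, by rw [card_compl, Fintype.card_fin]; have := v.2; omega⟩
  map_rel' := by
    intro u v huv
    obtain ⟨hne, ⟨hu, hv, huv⟩ | ⟨hv, hu, hvu⟩⟩ := huv
    all_goals
      refine ⟨fun h => hne (Subtype.ext (compl_injective (congrArg Subtype.val h))), ?_⟩
      simp only [card_compl, Fintype.card_fin, compl_subset_compl]
    · exact .inr ⟨by omega, by omega, huv⟩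
    · exact .inl ⟨by omega, by omega, hvu⟩

@[simp]
theorem coe_compl (hkn : k ≤ n) (v : LevelVert n k) : (compl hkn v).1 = v.1ᶜ :=
  rfl

@[simp]
theorem compl_compl (hkn : k ≤ n) (v : LevelVert n k) : compl hkn (compl hkn v) = v :=
  Subtype.ext (_root_.compl_compl v.1)

def levelColoring (hkn : k ≠ n - k) : (levelGraph n k).Coloring Bool :=
  Coloring.mk (fun v => decide (#v.1 = k)) <| by
    rintro u v ⟨-, ⟨hu, hv, -⟩ | ⟨hv, hu, -⟩⟩ <;> simp [hu, hv, hkn.symm]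

theorem odd_length_of_card_eq (hkn : k ≠ n - k) {u v : LevelVert n k} (hu : #u.1 = k)
    (hv : #v.1 = n - k) (p : (levelGraph n k).Walk u v) : Odd p.length :=
  ((levelColoring hkn).odd_length_iff_not_congr p).2 <| by
    change ¬decide (#u.1 = k) = true ↔ decide (#v.1 = k) = true
    simp [hu, hv, Ne.symm hkn]

def potential (T : Finset (Fin n)) (v : LevelVert n k) : ℕ :=
  2 * #(v.1 ∩ T) + if #v.1 = k then n - 2 * k else 0

theorem potential_le_of_adj (hkn : k < n - k) (T : Finset (Fin n)) ⦃u v : LevelVert n k⦄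
    (huv : (levelGraph n k).Adj u v) : potential T v ≤ potential T u + (n - 2 * k) := by
  obtain ⟨-, ⟨hu, hv, huv⟩ | ⟨hv, hu, hvu⟩⟩ := huv
  · have hvT : #(v.1 ∩ T) ≤ #(u.1 ∩ T) + #(v.1 \ u.1) := by
      refine (card_le_card fun x hx => ?_).trans (card_union_le _ _)
      simp only [mem_inter, mem_union, mem_sdiff] at hx ⊢
      tauto
    have hd : #(v.1 \ u.1) = n - 2 * k := by rw [card_sdiff_of_subset huv]; omega
    simp only [potential, hu, hv, if_pos, if_neg hkn.ne']
    omega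
  · have := card_le_card (inter_subset_inter_right hvu : v.1 ∩ T ⊆ u.1 ∩ T)
    simp only [potential, hu, hv, if_pos, if_neg hkn.ne']
    omega

theorem exists_edist_le_two_mul (hkn : k < n - k) {A T : Finset (Fin n)} (hA : #A = k)
    (hT : k ≤ #T) (j : ℕ) :
    ∃ (A' : Finset (Fin n)) (hA' : #A' = k),
      min k (#(A ∩ T) + j * (n - 2 * k)) ≤ #(A' ∩ T) ∧
      (levelGraph n k).edist (lower hA) (lower hA') ≤ (2 * j : ℕ) := by
  induction j with
  | zero => exact ⟨A, hA, by simp, by rw [SimpleGraph.edist_self]; exact zero_le⟩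
  | succ j ih =>
    obtain ⟨A₁, hA₁, hA₁T, hdist⟩ := ih
    obtain ⟨B, A', hA₁B, hA'B, hB, hA', hA'T⟩ :=
      exists_trade_via_superset (m := n - 2 * k) hA₁ hT (by simp only [Fintype.card_fin]; omega)
    rw [show k + (n - 2 * k) = n - k by omega] at hB
    refine ⟨A', hA', by rw [add_one_mul]; omega, ?_⟩
    calc (levelGraph n k).edist (lower hA) (lower hA')
        ≤ (levelGraph n k).edist (lower hA) (lower hA₁)
          + (levelGraph n k).edist (lower hA₁) (upper hB)
          + (levelGraph n k).edist (upper hB) (lower hA') :=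
          SimpleGraph.edist_triangle.trans (by gcongr; exact SimpleGraph.edist_triangle)
      _ ≤ (2 * j : ℕ) + 1 + 1 := by
        rw [edist_eq_one_iff_adj.2 (adj_of_subset hkn.ne hA₁ hB hA₁B),
          edist_eq_one_iff_adj.2 (adj_of_subset hkn.ne hA' hB hA'B).symm]
        gcongr
      _ = (2 * (j + 1) : ℕ) := by push_cast; ring

theorem edist_le_of_card_eq (hkn : k < n - k) {u : LevelVert n k} (hu : #u.1 = k)
    (v : LevelVert n k) :
    (levelGraph n k).edist u v ≤ (2 * (k ⌈/⌉ (n - 2 * k)) + 1 : ℕ) := by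
  change (levelGraph n k).edist (lower hu) v ≤ _
  set t := k ⌈/⌉ (n - 2 * k)
  have ht : k ≤ (n - 2 * k) * t := (ceilDiv_le_iff_le_mul (by omega)).1 le_rfl
  obtain ⟨A', hA', hA'v, hdist⟩ :=
    exists_edist_le_two_mul hkn hu (T := v.1) (by rcases v.2 with h | h <;> omega) t
  have hA'_sub : A' ⊆ v.1 :=
    inter_eq_left.1 (eq_of_subset_of_card_le inter_subset_left (by rw [mul_comm] at ht; omega))
  obtain ⟨V, hv | hv⟩ := v
  · obtain rfl : A' = V := eq_of_subset_of_card_le hA'_sub (by omega)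
    exact hdist.trans (by gcongr; omega)
  · calc (levelGraph n k).edist (lower hu) (upper hv)
        ≤ (levelGraph n k).edist (lower hu) (lower hA')
          + (levelGraph n k).edist (lower hA') (upper hv) := SimpleGraph.edist_triangle
      _ ≤ (2 * t : ℕ) + 1 := by
        rw [edist_eq_one_iff_adj.2 (adj_of_subset hkn.ne hA' hv hA'_sub)]
        gcongr
      _ = (2 * t + 1 : ℕ) := by push_cast; rfl

theorem edist_le_two_mul_ceilDiv_add_one (hkn : k < n - k) (u v : LevelVert n k) :
    (levelGraph n k).edist u v ≤ (2 * (k ⌈/⌉ (n - 2 * k)) + 1 : ℕ) := by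
  rcases u.2 with hu | hu
  · exact edist_le_of_card_eq hkn hu v
  · let c := compl (n := n) (k := k) (by omega)
    calc (levelGraph n k).edist u v = (levelGraph n k).edist (c (c u)) (c (c v)) := by
          simp only [c, compl_compl]
      _ ≤ (levelGraph n k).edist (c u) (c v) := c.edist_le _ _
      _ ≤ _ := edist_le_of_card_eq hkn (by simp [c, card_compl, hu]; omega) _

theorem two_mul_ceilDiv_add_one_le_edist_compl (hkn : k < n - k) {u : LevelVert n k}
    (hu : #u.1 = k) :
    (2 * (k ⌈/⌉ (n - 2 * k)) + 1 : ℕ) ≤ (levelGraph n k).edist u (compl (by omega) u) := by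
  refine le_iInf fun p => Nat.cast_le.2 ?_
  have hcu : #(compl (by omega) u).1 = n - k := by simp [card_compl, hu]
  obtain ⟨m, hm⟩ := odd_length_of_card_eq hkn.ne hu hcu p
  have hpot := p.le_add_mul_length (potential_le_of_adj hkn (compl (by omega) u).1)
  simp only [potential, inter_self, coe_compl, inter_compl, card_empty, card_compl,
    Fintype.card_fin, hu, if_pos, if_neg hkn.ne', hm, mul_add_one, mul_left_comm _ 2] at hpot
  suffices k ⌈/⌉ (n - 2 * k) ≤ m by omega
  rw [ceilDiv_le_iff_le_mul (by omega)]
  omega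

end levelGraph

theorem levelGraph_diam_general (n k : ℕ) (hkn : k < n - k) :
    (levelGraph n k).diam = 2 * ((k + (n - 2 * k) - 1) / (n - 2 * k)) + 1 := by
  rw [← Nat.ceilDiv_eq_add_pred_div]
  obtain ⟨A, -, hA⟩ := exists_subset_card_eq (s := (univ : Finset (Fin n))) (n := k)
    (by simp only [card_univ, Fintype.card_fin]; omega)
  have hediam : (levelGraph n k).ediam = (2 * (k ⌈/⌉ (n - 2 * k)) + 1 : ℕ) :=
    le_antisymm (ediam_le_of_edist_le (levelGraph.edist_le_two_mul_ceilDiv_add_one hkn))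
      ((levelGraph.two_mul_ceilDiv_add_one_le_edist_compl hkn (u := lower hA) hA).trans
        edist_le_ediam)
  rw [diam, hediam, ENat.toNat_natCast]

theorem levelGraph_diam (n k : ℕ) (hk : 0 < k) (hkn : k < n - k) :
    (levelGraph n k).diam = 2 * ((k + (n - 2 * k) - 1) / (n - 2 * k)) + 1 :=
  levelGraph_diam_general n k hkn
end

section
/- Let t = n - 2k > 0, s = ⌈k/t⌉, P = {1,…,k}, and for 0 ≤ i ≤ s let Δ(i) = {B ∈ [X]^{n-k} : d(P,B) = 2i+1} where d is graph distance in L_{k,n}. Then |Δ(i)| = Σ_{j=1}^{t} C(k, k - ((i-1)t + j))·C(n-k, it + j), with out-of-range binomial coefficients equal to 0. -/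
/-- Extended binomial coefficient: C(a,b) = 0 for b < 0 (and for b > a, via Nat.choose). -/
def C (a : ℕ) (b : ℤ) : ℕ := if 0 ≤ b then a.choose b.toNat else 0


open Finset SimpleGraph

/-!
Write `t = n - 2k` and `m = |P ∩ B|` for an `(n - k)`-set `B`. The graph is bipartite, so
`d(P, B)` is odd, and the potential `2 |P ∩ V|`, lowered by `t` on `(n - k)`-sets `V`, moves by at
most `t` along an edge; comparing its values `2k` at `P` and `2m - t` at `B` gives
`d(P, B) ≥ 2 (k - m) / t + 1`. Conversely, passing through a common `(n - k)`-superset, a `k`-set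
can trade `t` of its points outside `B` for points of `B` in two steps, so
`d(P, B) = 2 ⌈(k - m) / t⌉ + 1`. Thus `d(P, B) = 2i + 1` exactly when `k - m = (i - 1) t + j` with
`1 ≤ j ≤ t`, and the sets `B` with `|P ∩ B| = m` and `|B \ P| = l` number `C(k, m) C(n - k, l)`.
-/

theorem SimpleGraph.Walk.abs_sub_le_length_nsmul {V α : Type*} [AddCommGroup α] [LinearOrder α]
    [IsOrderedAddMonoid α] {G : SimpleGraph V} (f : V → α) {c : α}
    (hf : ∀ ⦃u v⦄, G.Adj u v → |f u - f v| ≤ c) {u v : V} (p : G.Walk u v) :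
    |f u - f v| ≤ p.length • c := by
  induction p with
  | nil => simp
  | @cons u v w h p ih =>
    calc |f u - f w| ≤ |f u - f v| + |f v - f w| := abs_sub_le _ _ _
      _ ≤ c + p.length • c := add_le_add (hf h) ih
      _ = (p.cons h).length • c := by rw [Walk.length_cons, succ_nsmul']

section Finset
variable {α : Type*} [DecidableEq α]

theorem Finset.card_inter_le_card_inter_add_card_sdiff_s15 (Q U V : Finset α) :
    #(Q ∩ V) ≤ #(Q ∩ U) + #(V \ U) :=
  calc #(Q ∩ V) ≤ #((Q ∩ U) ∪ (V \ U)) := card_le_card fun x ↦ by simp; tauto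
    _ ≤ #(Q ∩ U) + #(V \ U) := card_union_le _ _

/-- Two steps `A ⊆ C ⊇ A'` of a level graph raise the overlap with `B` by `t`, up to `k`. -/
theorem Finset.exists_common_superset_min_le_card_inter [Fintype α] {A B : Finset α} {k t : ℕ}
    (hA : #A = k) (hB : #B = k + t) :
    ∃ C A', A ⊆ C ∧ #C = k + t ∧ A' ⊆ C ∧ #A' = k ∧ min k (#(A ∩ B) + t) ≤ #(A' ∩ B) := by
  have hAB : #(A ∩ B) ≤ k := hA ▸ card_le_card inter_subset_left
  obtain ⟨D, hABD, hDB, hD⟩ := exists_subsuperset_card_eq (n := min k (#(A ∩ B) + t))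
    (show A ∩ B ⊆ B from inter_subset_right) (by omega) (by omega)
  have hAD : #(A ∩ B) ≤ #(A ∩ D) := card_le_card (subset_inter inter_subset_left hABD)
  have hAuD : #(A ∪ D) ≤ k + t := by have := card_union_add_card_inter A D; omega
  obtain ⟨C, hADC, -, hC⟩ := exists_subsuperset_card_eq (subset_univ (A ∪ D)) hAuD
    (hB ▸ card_le_univ B)
  obtain ⟨A', hDA', hA'C, hA'⟩ := exists_subsuperset_card_eq (n := k) (union_subset_right hADC)
    (by omega) (by omega)
  exact ⟨C, A', union_subset_left hADC, hC, hA'C, hA',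
    hD ▸ card_le_card (subset_inter hDA' hDB)⟩

theorem Finset.card_filter_card_inter_eq_card_sdiff_eq [Fintype α] (P : Finset α) (m l : ℕ) :
    #{B | #(P ∩ B) = m ∧ #(B \ P) = l} = (#P).choose m * (#Pᶜ).choose l := by
  have split : ∀ X Y : Finset α, X ⊆ P → Disjoint P Y → P ∩ (X ∪ Y) = X ∧ (X ∪ Y) \ P = Y := by
    intro X Y hX hY
    constructor <;> ext x <;> grind [disjoint_left]
  rw [← card_powersetCard, ← card_powersetCard, ← card_product]
  refine card_nbij' (fun B ↦ (P ∩ B, B \ P)) (fun X ↦ X.1 ∪ X.2) ?_ ?_ ?_ ?_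
  · intro B hB
    simp only [mem_coe, mem_filter, mem_univ, true_and] at hB
    simp [mem_powersetCard, hB, subset_compl_iff_disjoint_left, disjoint_sdiff]
  · rintro ⟨X, Y⟩ h
    simp only [coe_product, Set.mem_prod, mem_coe, mem_powersetCard,
      subset_compl_iff_disjoint_left] at h
    obtain ⟨⟨hXP, rfl⟩, hPY, rfl⟩ := h
    simp [split X Y hXP hPY]
  · intro B _
    simp only [inter_comm P]
    exact sup_inf_sdiff B P
  · rintro ⟨X, Y⟩ h
    simp only [coe_product, Set.mem_prod, mem_coe, mem_powersetCard,
      subset_compl_iff_disjoint_left] at h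
    simp [split X Y h.1.1 h.2.1]

theorem Finset.card_filter_card_inter_eq_card_sdiff_eq_int [Fintype α] (P : Finset α) (m l : ℤ) :
    #{B | (#(P ∩ B) : ℤ) = m ∧ (#(B \ P) : ℤ) = l} = C #P m * C #Pᶜ l := by
  by_cases hml : 0 ≤ m ∧ 0 ≤ l
  · obtain ⟨hm, hl⟩ := hml
    lift m to ℕ using hm
    lift l to ℕ using hl
    simpa [C] using card_filter_card_inter_eq_card_sdiff_eq P m l
  · rw [not_and_or, not_le, not_le] at hml
    have hempty : ({B | (#(P ∩ B) : ℤ) = m ∧ (#(B \ P) : ℤ) = l} : Finset (Finset α)) = ∅ :=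
      filter_eq_empty_iff.2 fun B _ ↦ by omega
    rcases hml with h | h <;> simp [hempty, C, h.not_ge]

theorem Finset.card_filter_card_eq_and_mem_Ioc [Fintype α] (P : Finset α) (b : ℕ) (x : ℤ)
    (t : ℕ) :
    #{B | #B = b ∧ x < #P - #(P ∩ B) ∧ #P - #(P ∩ B) ≤ x + t} =
      ∑ j ∈ Icc 1 t, C #P (#P - (x + j)) * C #Pᶜ (b - #P + (x + j)) := by
  rw [card_eq_sum_card_fiberwise (f := fun B ↦ ((#P : ℤ) - #(P ∩ B) - x).toNat) (t := Icc 1 t)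
    (fun B hB ↦ by rw [mem_coe, mem_filter] at hB; rw [mem_coe, mem_Icc]; dsimp only; omega)]
  refine sum_congr rfl fun j hj ↦ ?_
  rw [← card_filter_card_inter_eq_card_sdiff_eq_int, filter_filter]
  congr 1
  refine filter_congr fun B _ ↦ ?_
  have := card_inter_add_card_sdiff B P
  rw [inter_comm] at this
  rw [mem_Icc] at hj
  omega

end Finset

section LevelGraph
variable {n k : ℕ}

theorem card_Pset (h : k ≤ n) : #(Pset n k) = k := by
  rw [Pset, Fin.card_filter_val_lt, min_eq_right h]

theorem levelGraph_adj_of_subset_s15 (hkn : k < n - k) {A B : LevelVert n k} (hA : #A.1 = k)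
    (hB : #B.1 = n - k) (hAB : A.1 ⊆ B.1) : (levelGraph n k).Adj A B :=
  ⟨by rintro rfl; omega, Or.inl ⟨hA, hB, hAB⟩⟩

def levelGraphBicoloring (hkn : k ≠ n - k) : (levelGraph n k).Coloring Bool :=
  Coloring.mk (fun V ↦ #V.1 = k) fun h ↦ by
    rcases h.2 with ⟨hA, hB, -⟩ | ⟨hB, hA, -⟩ <;> simp [hA, hB, Ne.symm hkn]

def levelPotential (Q : Finset (Fin n)) (V : LevelVert n k) : ℤ :=
  2 * #(Q ∩ V.1) - if #V.1 = k then 0 else (n - 2 * k : ℤ)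

theorem abs_levelPotential_sub_le (hkn : k < n - k) (Q : Finset (Fin n)) {U V : LevelVert n k}
    (h : (levelGraph n k).Adj U V) :
    |levelPotential Q U - levelPotential Q V| ≤ (n - 2 * k : ℤ) := by
  have key : ∀ U V : LevelVert n k, #U.1 = k → #V.1 = n - k → U.1 ⊆ V.1 →
      |levelPotential Q U - levelPotential Q V| ≤ (n - 2 * k : ℤ) := by
    intro U V hU hV hUV
    have hmono := card_le_card (inter_subset_inter_left (s := Q) hUV)
    have hstep := card_inter_le_card_inter_add_card_sdiff_s15 Q U.1 V.1
    rw [card_sdiff_of_subset hUV] at hstep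
    simp only [levelPotential, hU, hV, if_true, show n - k ≠ k by omega, if_false]
    rw [abs_le]
    omega
  rcases h.2 with ⟨hU, hV, hUV⟩ | ⟨hV, hU, hVU⟩
  · exact key U V hU hV hUV
  · rw [abs_sub_comm]
    exact key V U hV hU hVU

theorem levelGraph_walk_odd_and_le_length_mul (hkn : k < n - k) {A B : LevelVert n k}
    (hA : #A.1 = k) (hB : #B.1 = n - k) (p : (levelGraph n k).Walk A B) :
    Odd p.length ∧ 2 * ((k : ℤ) - #(A.1 ∩ B.1)) + (n - 2 * k) ≤ p.length * (n - 2 * k) := by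
  constructor
  · rw [(levelGraphBicoloring hkn.ne).odd_length_iff_not_congr]
    change ¬decide (#A.1 = k) = true ↔ decide (#B.1 = k) = true
    simp [hA, hB, Ne.symm hkn.ne]
  · have hpot := p.abs_sub_le_length_nsmul (levelPotential A.1)
      fun _ _ h ↦ abs_levelPotential_sub_le hkn A.1 h
    simp only [levelPotential, hA, hB, inter_self, if_true, show n - k ≠ k by omega, if_false,
      nsmul_eq_mul, abs_le] at hpot
    linarith [hpot.2]

theorem levelGraph_exists_walk_length_le (hkn : k < n - k) {B : LevelVert n k}
    (hB : #B.1 = n - k) (i : ℕ) :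
    ∀ A : LevelVert n k, #A.1 = k → (k : ℤ) - #(A.1 ∩ B.1) ≤ i * (n - 2 * k) →
      ∃ p : (levelGraph n k).Walk A B, p.length ≤ 2 * i + 1 := by
  induction i with
  | zero =>
    intro A hA hAB
    have hsub : A.1 ⊆ B.1 := by
      rw [← inter_eq_left]
      exact eq_of_subset_of_card_le inter_subset_left (by push_cast at hAB; omega)
    exact ⟨.cons (levelGraph_adj_of_subset_s15 hkn hA hB hsub) .nil, le_rfl⟩
  | succ i ih =>
    intro A hA hAB
    obtain ⟨C, A', hAC, hC, hA'C, hA', hA'B⟩ :=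
      exists_common_superset_min_le_card_inter (B := B.1) (t := n - 2 * k) hA (by omega)
    have hA'B' : (k : ℤ) - #(A' ∩ B.1) ≤ i * (n - 2 * k) := by
      have ht : ((n - 2 * k : ℕ) : ℤ) = n - 2 * k := by omega
      rcases min_le_iff.1 hA'B with h | h
      · have : (0 : ℤ) ≤ i * (n - 2 * k) := mul_nonneg i.cast_nonneg (by omega)
        omega
      · push_cast at hAB h
        linarith
    have hC' : #C = n - k := by omega
    let Cv : LevelVert n k := ⟨C, Or.inr hC'⟩
    let A'v : LevelVert n k := ⟨A', Or.inl hA'⟩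
    obtain ⟨p, hp⟩ := ih A'v hA' hA'B'
    refine ⟨.cons (levelGraph_adj_of_subset_s15 hkn (B := Cv) hA hC' hAC)
      (.cons (levelGraph_adj_of_subset_s15 hkn (A := A'v) hA' hC' hA'C).symm p), ?_⟩
    simp only [Walk.length_cons]
    omega

theorem levelGraph_dist_eq_iff (hkn : k < n - k) {P B : LevelVert n k}
    (hP : #P.1 = k) (hB : #B.1 = n - k) (i : ℕ) :
    (levelGraph n k).dist P B = 2 * i + 1 ↔
      ((i : ℤ) - 1) * (n - 2 * k) < k - #(P.1 ∩ B.1) ∧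
        (k : ℤ) - #(P.1 ∩ B.1) ≤ i * (n - 2 * k) := by
  have ht : (0 : ℤ) < n - 2 * k := by omega
  have hPB : #(P.1 ∩ B.1) ≤ k := (card_le_card inter_subset_left).trans_eq hP
  have hdist_le : ∀ c : ℕ, (k : ℤ) - #(P.1 ∩ B.1) ≤ c * (n - 2 * k) →
      (levelGraph n k).dist P B ≤ 2 * c + 1 := fun c hc ↦
    let ⟨p, hp⟩ := levelGraph_exists_walk_length_le hkn hB c P hP hc
    (dist_le p).trans hp
  have hreach : (levelGraph n k).Reachable P B :=
    let ⟨p, _⟩ := levelGraph_exists_walk_length_le hkn hB k P hP (by nlinarith)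
    ⟨p⟩
  obtain ⟨p, hp⟩ := hreach.exists_walk_length_eq_dist
  obtain ⟨⟨c, hc⟩, hlower⟩ := levelGraph_walk_odd_and_le_length_mul hkn hP hB p
  rw [hp] at hc hlower
  rw [hc] at hlower ⊢
  push_cast at hlower
  have hc_le : (k : ℤ) - #(P.1 ∩ B.1) ≤ c * (n - 2 * k) := by linarith
  have hc_lt : ((c : ℤ) - 1) * (n - 2 * k) < k - #(P.1 ∩ B.1) := by
    rcases c with _ | c
    · push_cast; linarith
    · by_contra! h
      have := hdist_le c (by push_cast at h; linarith)
      omega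
  constructor
  · intro hi
    obtain rfl : i = c := by omega
    exact ⟨hc_lt, hc_le⟩
  · rintro ⟨hi_lt, hi_le⟩
    have h1 : (i : ℤ) - 1 < c := lt_of_mul_lt_mul_right (by linarith) ht.le
    have h2 : (c : ℤ) - 1 < i := lt_of_mul_lt_mul_right (by linarith) ht.le
    omega

theorem natCard_subtype_levelVert (q : Finset (Fin n) → Prop) [DecidablePred q]
    (hq : ∀ A, q A → #A = n - k) : Nat.card {B : LevelVert n k // q B.1} = #{A | q A} := by
  rw [← Fintype.card_subtype, ← Nat.card_eq_fintype_card]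
  exact Nat.card_congr (Equiv.subtypeSubtypeEquivSubtype fun h ↦ Or.inr (hq _ h))

end LevelGraph

theorem card_Delta_general (n k : ℕ) (hkn : k < n - k)
    (P : LevelVert n k) (hP : P.1 = Pset n k)
    (i : ℕ) :
    Nat.card {B : LevelVert n k //
        B.1.card = n - k ∧ (levelGraph n k).dist P B = 2 * i + 1} =
      ∑ j ∈ Finset.Icc 1 (n - 2 * k),
        C k ((k : ℤ) - (((i : ℤ) - 1) * (n - 2 * k) + j)) *
        C (n - k) ((i : ℤ) * (n - 2 * k) + j) := by
  classical
  have hPk : #P.1 = k := hP ▸ card_Pset (by omega)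
  have hPc : #P.1ᶜ = n - k := by rw [card_compl, hPk, Fintype.card_fin]
  have ht : ((n - 2 * k : ℕ) : ℤ) = n - 2 * k := by omega
  let q : Finset (Fin n) → Prop := fun A ↦ #A = n - k ∧
    ((i : ℤ) - 1) * (n - 2 * k) < #P.1 - #(P.1 ∩ A) ∧
    #P.1 - #(P.1 ∩ A) ≤ ((i : ℤ) - 1) * (n - 2 * k) + (n - 2 * k : ℕ)
  have hdist (B : LevelVert n k) :
      #B.1 = n - k ∧ (levelGraph n k).dist P B = 2 * i + 1 ↔ q B.1 :=
    and_congr_right fun hB ↦ by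
      rw [levelGraph_dist_eq_iff hkn hPk hB, hPk, ht, sub_one_mul, sub_add_cancel]
  rw [Nat.card_congr (Equiv.subtypeEquivRight hdist),
    natCard_subtype_levelVert q fun _ ↦ And.left, card_filter_card_eq_and_mem_Ioc, hPk, hPc]
  refine sum_congr rfl fun j _ ↦ ?_
  congr 2
  rw [Nat.cast_sub (by omega : k ≤ n)]
  ring

theorem card_Delta (n k : ℕ) (hk : 0 < k) (hkn : k < n - k)
    (P : LevelVert n k) (hP : P.1 = Pset n k)
    (i : ℕ) (hi : i ≤ (k + (n - 2 * k) - 1) / (n - 2 * k)) :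
    Nat.card {B : LevelVert n k //
        B.1.card = n - k ∧ (levelGraph n k).dist P B = 2 * i + 1} =
      ∑ j ∈ Finset.Icc 1 (n - 2 * k),
        C k ((k : ℤ) - (((i : ℤ) - 1) * (n - 2 * k) + j)) *
        C (n - k) ((i : ℤ) * (n - 2 * k) + j) :=
  card_Delta_general n k hkn P hP i
end
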